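/- Let f : ℝ^n → ℝ be twice continuously differentiable and convex, and let x* be an η-stationary point of (SCO) with Γ* := supp(x*). Then for every x ∈ ℝ^n, f(x*) ≤ f(x) + (x*_{(s)}/η)·‖x_{Γ*^c}‖_1, where x*_{(s)} is the s-th largest absolute value among the entries of x* and ‖·‖_1 is the ℓ₁ norm. -/

import Mathlib

open Finset Filter Topology

noncomputable section

variable {n : ℕ}

/-- Euclidean space ℝ^n -/
abbrev Euc (n : ℕ) := EuclideanSpace ℝ (Fin n)

/-- support of a vector as a Finset -/
def supp (x : Euc n) : Finset (Fin n) := Finset.univ.filter (fun i => x i ≠ 0)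

/-- `x` is `s`-sparse, i.e. `‖x‖₀ ≤ s` -/
def Sparse (s : ℕ) (x : Euc n) : Prop := (supp x).card ≤ s

/-- hard-thresholding operator: the set of best s-sparse approximations of `x` -/
def HardThr (s : ℕ) (x : Euc n) : Set (Euc n) :=
  {z | Sparse s z ∧ ∀ w : Euc n, Sparse s w → ‖x - z‖ ≤ ‖x - w‖}

/-- Hessian of `f` at `x` as a continuous linear map -/
def hess (f : Euc n → ℝ) (x : Euc n) : Euc n →L[ℝ] Euc n := fderiv ℝ (gradient f) x

/-- `x` is an η-stationary point of (SCO) -/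
def EtaStationary (f : Euc n → ℝ) (s : ℕ) (η : ℝ) (x : Euc n) : Prop :=
  x ∈ HardThr s (x - η • gradient f x)

/-- the collection `T(x;η)` of best s-support index sets of `x - η ∇f(x)` -/
def TT (f : Euc n → ℝ) (s : ℕ) (η : ℝ) (x : Euc n) : Set (Finset (Fin n)) :=
  {T | T.card = s ∧ ∃ z ∈ HardThr s (x - η • gradient f x), supp z ⊆ T}

/-- the map `F_η(x;T)`: gradient entries on `T`, `x` entries on `Tᶜ` -/
def Fmap (f : Euc n → ℝ) (T : Finset (Fin n)) (x : Euc n) : Euc n :=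
  WithLp.toLp 2 (fun i => if i ∈ T then gradient f x i else x i)

/-- the point `x^k(α)` of the line search -/
def stepPt (T : Finset (Fin n)) (x d : Euc n) (a : ℝ) : Euc n :=
  WithLp.toLp 2 (fun i => if i ∈ T then x i + a * d i else 0)

/-- `f` is `M`-restricted strongly smooth (`M_{2s}`-RSS) -/
def RSS (f : Euc n → ℝ) (s : ℕ) (M : ℝ) : Prop :=
  ∀ x y : Euc n, Sparse s x → (supp x ∪ supp y).card ≤ 2 * s →
    (inner ℝ y (hess f x y) : ℝ) ≤ M * ‖y‖ ^ 2

/-- `f` is `m`-restricted strongly convex (`m_{2s}`-RSC) -/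
def RSC (f : Euc n → ℝ) (s : ℕ) (m : ℝ) : Prop :=
  ∀ x y : Euc n, Sparse s x → (supp x ∪ supp y).card ≤ 2 * s →
    m * ‖y‖ ^ 2 ≤ (inner ℝ y (hess f x y) : ℝ)

/-- `f` is `m`-restricted strongly convex on a set `U` (e.g. a neighborhood) -/
def RSCOn (f : Euc n → ℝ) (s : ℕ) (m : ℝ) (U : Set (Euc n)) : Prop :=
  ∀ z ∈ U, Sparse s z → ∀ y : Euc n, (supp z ∪ supp y).card ≤ 2 * s →
    m * ‖y‖ ^ 2 ≤ (inner ℝ y (hess f z y) : ℝ)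

/-- norm of the subvector of `v` indexed by `T` -/
def normOn (T : Finset (Fin n)) (v : Euc n) : ℝ := Real.sqrt (∑ i ∈ T, (v i) ^ 2)

/-- `f` is locally restricted Hessian Lipschitz continuous at `xs` with constant `L`:
for all `y, z` in `N_s(xs) = {z : supp xs ⊆ supp z, ‖z‖₀ ≤ s}` and every `T ⊇ supp xs`
with `|T| ≤ s`, the row-submatrix `∇²_{T:}` is `L`-Lipschitz (in operator norm). -/
def RestrictedHessLip (f : Euc n → ℝ) (s : ℕ) (xs : Euc n) (L : ℝ) : Prop :=
  ∀ T : Finset (Fin n), T.card ≤ s → supp xs ⊆ T →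
    ∀ y z : Euc n, supp xs ⊆ supp y → Sparse s y → supp xs ⊆ supp z → Sparse s z →
      ∀ w : Euc n, normOn T (hess f y w - hess f z w) ≤ L * ‖y - z‖ * ‖w‖

/-- the restricted Newton direction: `d_{T^c} = -x_{T^c}` and
`∇²_T f(x) d_T = ∇²_{T,T^c} f(x) x_{T^c} - ∇_T f(x)`
(equivalently `(∇²f(x) d)_T = -∇_T f(x)` given `d_{T^c} = -x_{T^c}`). -/
def IsNewtonDir (f : Euc n → ℝ) (T : Finset (Fin n)) (x d : Euc n) : Prop :=
  (∀ i ∉ T, d i = -x i) ∧ (∀ i ∈ T, hess f x d i = -(gradient f x) i)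

/-- the restricted gradient direction -/
def IsGradDir (f : Euc n → ℝ) (T : Finset (Fin n)) (x d : Euc n) : Prop :=
  (∀ i ∈ T, d i = -(gradient f x) i) ∧ (∀ i ∉ T, d i = -x i)

/-- acceptance condition for the Newton direction:
`⟨∇_T f(x), d_T⟩ ≤ -γ‖d‖² + ‖x_{T^c}‖²/(4η)` -/
def Accept (f : Euc n → ℝ) (γ η : ℝ) (T : Finset (Fin n)) (x d : Euc n) : Prop :=
  ∑ i ∈ T, gradient f x i * d i ≤ -γ * ‖d‖ ^ 2 + (∑ i ∈ Tᶜ, (x i) ^ 2) / (4 * η)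

/-- the search direction of NHTP: Newton direction if it exists and is accepted,
otherwise the restricted gradient direction -/
def SearchDir (f : Euc n → ℝ) (γ η : ℝ) (T : Finset (Fin n)) (x d : Euc n) : Prop :=
  (IsNewtonDir f T x d ∧ Accept f γ η T x d) ∨
  (IsGradDir f T x d ∧ ¬ ∃ dN : Euc n, IsNewtonDir f T x dN ∧ Accept f γ η T x dN)

/-- the Armijo inequality at steplength `a` -/
def ArmijoIneq (f : Euc n → ℝ) (σ : ℝ) (T : Finset (Fin n)) (x d : Euc n) (a : ℝ) : Prop :=
  f (stepPt T x d a) ≤ f x + σ * a * (inner ℝ (gradient f x) d : ℝ)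

/-- `\barα := min{(1-2σ)/(M/γ - σ), 1}` -/
def barAlpha (M γ σ : ℝ) : ℝ := min ((1 - 2 * σ) / (M / γ - σ)) 1

/-- `\barη := min{γ \barα β / M², \barα β, 1/(4M)}` -/
def barEta (M γ σ β : ℝ) : ℝ :=
  min (γ * (barAlpha M γ σ * β) / M ^ 2) (min (barAlpha M γ σ * β) (1 / (4 * M)))

/-- the sequences `(x^k, T_k, d^k, α_k)` are generated by the NHTP algorithm -/
structure NHTP (f : Euc n → ℝ) (s : ℕ) (γ σ β η : ℝ)
    (x : ℕ → Euc n) (T : ℕ → Finset (Fin n)) (d : ℕ → Euc n) (α : ℕ → ℝ) : Prop where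
  sparse0 : Sparse s (x 0)
  mem : ∀ k, T k ∈ TT f s η (x k)
  dir : ∀ k, SearchDir f γ η (T k) (x k) (d k)
  alpha : ∀ k, ∃ ℓ : ℕ, α k = β ^ ℓ ∧ ArmijoIneq f σ (T k) (x k) (d k) (β ^ ℓ) ∧
      ∀ m' < ℓ, ¬ ArmijoIneq f σ (T k) (x k) (d k) (β ^ m')
  update : ∀ k, x (k + 1) = stepPt (T k) (x k) (d k) (α k)

/-- `x_{(s)}`: the s-th largest absolute value among the entries of `x` -/
def nthAbs (x : Euc n) (s : ℕ) : ℝ :=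
  ((Finset.univ.val.map (fun i => |x i|)).sort (· ≤ ·)).getD (n - s) 0

end

/-!
Convexity gives `f x ≥ f x* + ⟪∇f x*, x - x*⟫`. Comparing `x*` with the `s`-sparse competitors
obtained from it by changing one or two coordinates shows that η-stationarity forces
`∇_Γ f x* = 0` and `η |∇_i f x*| ≤ |x*_j|` for `i ∉ Γ`, `j ∈ Γ`, and even `∇_i f x* = 0` when
`|Γ| < s`. When `|Γ| = s` the value `x*_(s)` is some `|x*_j|` with `j ∈ Γ`, so
`-⟪∇f x*, x - x*⟫ = -∑_{i ∉ Γ} ∇_i f x* · x_i ≤ (x*_(s) / η) ‖x_{Γᶜ}‖₁`.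
-/

theorem ConvexOn.add_fderiv_le {E : Type*} [NormedAddCommGroup E] [NormedSpace ℝ E]
    {s : Set E} {f : E → ℝ} {f' : E →L[ℝ] ℝ} {x y : E} (hf : ConvexOn ℝ s f)
    (hx : x ∈ s) (hy : y ∈ s) (hf' : HasFDerivAt f f' x) :
    f x + f' (y - x) ≤ f y := by
  have hline : HasDerivAt (f ∘ (AffineMap.lineMap x y : ℝ → E)) (f' (y - x)) 0 :=
    HasFDerivAt.comp_hasDerivAt (0 : ℝ) (by simpa using hf') AffineMap.hasDerivAt_lineMap
  have hslope := (hf.comp_affineMap (AffineMap.lineMap x y)).le_slope_of_hasDerivAt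
    (by simpa using hx) (by simpa using hy) zero_lt_one hline
  rwa [slope_def_field, Function.comp_apply, Function.comp_apply, AffineMap.lineMap_apply_one,
    AffineMap.lineMap_apply_zero, sub_zero, div_one, le_sub_iff_add_le'] at hslope

theorem ConvexOn.add_inner_gradient_le {E : Type*} [NormedAddCommGroup E]
    [InnerProductSpace ℝ E] [CompleteSpace E] {s : Set E} {f : E → ℝ} {x y : E}
    (hf : ConvexOn ℝ s f) (hx : x ∈ s) (hy : y ∈ s) (hd : DifferentiableAt ℝ f x) :
    f x + inner ℝ (gradient f x) (y - x) ≤ f y := by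
  simpa using hf.add_fderiv_le hx hy hd.hasGradientAt.hasFDerivAt

theorem List.Pairwise.succ_le_countP_of_getElem_le {α : Type*} [Preorder α] [DecidableLE α]
    {l : List α} (hl : l.Pairwise (· ≤ ·)) {k : ℕ} (hk : k < l.length) {v : α}
    (hv : l[k] ≤ v) : k + 1 ≤ l.countP (· ≤ v) := by
  have htake : (l.take (k + 1)).countP (· ≤ v) = k + 1 := by
    rw [List.countP_eq_length.mpr, List.length_take_of_le hk]
    intro a ha
    obtain ⟨m, hm, rfl⟩ := List.mem_take_iff_getElem.mp ha
    simp only [decide_eq_true_eq]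
    rcases (Nat.lt_succ_iff.mp (lt_of_lt_of_le hm (min_le_left _ _))).lt_or_eq with hmk | rfl
    · exact (List.pairwise_iff_getElem.mp hl m k _ hk hmk).trans hv
    · exact hv
  exact htake ▸ (List.take_sublist _ _).countP_le

variable {n : ℕ}

theorem mem_supp {x : Euc n} {i : Fin n} : i ∈ supp x ↔ x i ≠ 0 := by
  simp [supp]

theorem notMem_supp {x : Euc n} {i : Fin n} : i ∉ supp x ↔ x i = 0 := by
  simp [supp]

-- ascending, so `nthAbs x s` is its entry at index `n - s`
noncomputable def sortedAbs (x : Euc n) : List ℝ := (univ.val.map (fun i => |x i|)).sort (· ≤ ·)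

theorem nthAbs_eq_getD (x : Euc n) (s : ℕ) : nthAbs x s = (sortedAbs x).getD (n - s) 0 := rfl

theorem pairwise_sortedAbs (x : Euc n) : (sortedAbs x).Pairwise (· ≤ ·) :=
  Multiset.pairwise_sort _ _

theorem length_sortedAbs (x : Euc n) : (sortedAbs x).length = n := by
  simp [sortedAbs]

theorem mem_sortedAbs {x : Euc n} {a : ℝ} : a ∈ sortedAbs x ↔ ∃ i, |x i| = a := by
  simp [sortedAbs]

theorem countP_sortedAbs_le_zero (x : Euc n) :
    (sortedAbs x).countP (· ≤ 0) = (supp x)ᶜ.card := by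
  rw [← Multiset.coe_countP, sortedAbs, Multiset.sort_eq, Multiset.countP_map,
    ← Finset.filter_val, Finset.card_val]
  congr 1
  ext i
  simp [notMem_supp]

theorem nthAbs_nonneg (x : Euc n) (s : ℕ) : 0 ≤ nthAbs x s := by
  rw [nthAbs_eq_getD]
  rcases lt_or_ge (n - s) (sortedAbs x).length with hk | hk
  · obtain ⟨i, hi⟩ := mem_sortedAbs.mp (List.getElem_mem hk)
    rw [List.getD_eq_getElem _ _ hk, ← hi]
    exact abs_nonneg _
  · rw [List.getD_eq_default _ _ hk]

theorem exists_mem_supp_nthAbs_eq {x : Euc n} {s : ℕ} (hs : 1 ≤ s)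
    (hcard : s ≤ (supp x).card) : ∃ j ∈ supp x, nthAbs x s = |x j| := by
  have hsn : s ≤ n := hcard.trans ((card_le_univ _).trans_eq (Fintype.card_fin n))
  have hk : n - s < (sortedAbs x).length := by rw [length_sortedAbs]; omega
  obtain ⟨j, hj⟩ := mem_sortedAbs.mp (List.getElem_mem hk)
  -- only `n - #(supp x) ≤ n - s` entries of `sortedAbs x` vanish, so the one at `n - s` does not
  refine ⟨j, mem_supp.mpr fun hxj => ?_, by rw [nthAbs_eq_getD, List.getD_eq_getElem _ _ hk, hj]⟩
  have := (pairwise_sortedAbs x).succ_le_countP_of_getElem_le hk (v := 0)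
    (by rw [← hj, hxj, abs_zero])
  rw [countP_sortedAbs_le_zero, card_compl, Fintype.card_fin] at this
  omega

namespace HardThr

variable {s : ℕ} {u z : Euc n}

theorem sum_sq_sub_le (hz : z ∈ HardThr s u) {w : Euc n} (hw : Sparse s w)
    {S : Finset (Fin n)} (hS : ∀ k ∉ S, w k = z k) :
    ∑ k ∈ S, (u k - z k) ^ 2 ≤ ∑ k ∈ S, (u k - w k) ^ 2 := by
  have hnorm := pow_le_pow_left₀ (norm_nonneg _) (hz.2 w hw) 2
  simp only [EuclideanSpace.real_norm_sq_eq, PiLp.sub_apply] at hnorm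
  rw [← sum_add_sum_compl S, ← sum_add_sum_compl S (fun k => (u k - w k) ^ 2)] at hnorm
  have hcompl : ∑ k ∈ Sᶜ, (u k - w k) ^ 2 = ∑ k ∈ Sᶜ, (u k - z k) ^ 2 :=
    sum_congr rfl fun k hk => by rw [hS k (mem_compl.mp hk)]
  linarith

theorem apply_eq (hz : z ∈ HardThr s u) {i : Fin n} (hi : i ∈ supp z ∨ (supp z).card < s) :
    u i = z i := by
  set w : Euc n := WithLp.toLp 2 (Function.update z.ofLp i (u i))
  have hw : Sparse s w := by
    have hsub : supp w ⊆ insert i (supp z) := by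
      intro k hk
      by_cases hki : k = i
      · simp [hki]
      · simp_all [w, mem_supp]
    refine (card_le_card hsub).trans ?_
    rcases hi with hi | hi
    · rw [insert_eq_of_mem hi]; exact hz.1
    · exact (card_insert_le _ _).trans hi
  have := sum_sq_sub_le hz hw (S := {i}) fun k hk => by simp_all [w]
  simpa [w, sub_eq_zero] using this

theorem abs_apply_le (hz : z ∈ HardThr s u) {i j : Fin n} (hi : i ∉ supp z)
    (hj : j ∈ supp z) : |u i| ≤ |z j| := by
  have hij : i ≠ j := by rintro rfl; exact hi hj
  set w : Euc n := WithLp.toLp 2 (Function.update (Function.update z.ofLp j 0) i (u i))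
  have hw : Sparse s w := by
    have hsub : supp w ⊆ insert i ((supp z).erase j) := by
      intro k hk
      by_cases hki : k = i
      · simp [hki]
      · by_cases hkj : k = j <;> simp_all [w, mem_supp]
    calc (supp w).card ≤ ((supp z).erase j).card + 1 :=
          (card_le_card hsub).trans (card_insert_le _ _)
      _ = (supp z).card := card_erase_add_one hj
      _ ≤ s := hz.1
  have := sum_sq_sub_le hz hw (S := {i, j}) fun k hk => by
    simp only [mem_insert, mem_singleton, not_or] at hk
    simp [w, hk.1, hk.2]
  have hwi : w i = u i := by simp [w]
  have hwj : w j = 0 := by simp [w, Ne.symm hij]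
  rw [sum_pair hij, sum_pair hij, hwi, hwj, apply_eq hz (Or.inl hj), notMem_supp.mp hi] at this
  exact sq_le_sq.mp (by linarith)

end HardThr

namespace EtaStationary

variable {f : Euc n → ℝ} {s : ℕ} {η : ℝ} {x : Euc n} {i : Fin n}

theorem gradient_eq_zero (h : EtaStationary f s η x) (hη : η ≠ 0)
    (hi : i ∈ supp x ∨ (supp x).card < s) : gradient f x i = 0 := by
  have := HardThr.apply_eq h hi
  simp only [PiLp.sub_apply, PiLp.smul_apply, smul_eq_mul, sub_eq_self, mul_eq_zero] at this
  exact this.resolve_left hη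

theorem abs_gradient_le (h : EtaStationary f s η x) (hη : 0 < η) (hi : i ∉ supp x)
    {j : Fin n} (hj : j ∈ supp x) : η * |gradient f x i| ≤ |x j| := by
  have := HardThr.abs_apply_le h hi hj
  simp_all [mem_supp, abs_mul, abs_of_pos hη]

theorem abs_gradient_le_nthAbs (h : EtaStationary f s η x) (hs : 1 ≤ s) (hη : 0 < η)
    (hi : i ∉ supp x) : |gradient f x i| ≤ nthAbs x s / η := by
  rw [le_div_iff₀ hη, mul_comm]
  rcases lt_or_ge (supp x).card s with hcard | hcard
  · rw [h.gradient_eq_zero hη.ne' (Or.inr hcard), abs_zero, mul_zero]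
    exact nthAbs_nonneg x s
  · obtain ⟨j, hj, hxj⟩ := exists_mem_supp_nthAbs_eq hs hcard
    exact hxj ▸ h.abs_gradient_le hη hi hj

end EtaStationary

theorem neg_inner_sub_le {g z x : Euc n} {c : ℝ} (hg : ∀ i ∈ supp z, g i = 0)
    (hc : ∀ i ∉ supp z, |g i| ≤ c) :
    -inner ℝ g (x - z) ≤ c * ∑ i ∈ (supp z)ᶜ, |x i| := by
  simp only [PiLp.inner_apply, PiLp.sub_apply, RCLike.inner_apply, conj_trivial]
  rw [← sum_add_sum_compl (supp z), sum_eq_zero fun i hi => by simp [hg i hi], zero_add,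
    mul_sum, ← sum_neg_distrib]
  refine sum_le_sum fun i hi => ?_
  rw [mem_compl] at hi
  calc -((x i - z i) * g i) = -(g i * x i) := by rw [notMem_supp.mp hi]; ring
    _ ≤ |g i * x i| := neg_le_abs _
    _ = |g i| * |x i| := abs_mul _ _
    _ ≤ c * |x i| := mul_le_mul_of_nonneg_right (hc i hi) (abs_nonneg _)

/-- Theorem "Global convergence", inequality (ε-optimality):
if `f` is convex and `xs` is an η-stationary point with `Γ* = supp xs`, then for every `x`,
`f(xs) ≤ f(x) + (xs_{(s)}/η)‖x_{Γ*^c}‖₁`. -/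
theorem stmt_12 {n s : ℕ} (hs : 1 ≤ s) (f : Euc n → ℝ) (hf : ContDiff ℝ 2 f)
    (hconv : ConvexOn ℝ Set.univ f)
    (η : ℝ) (hη : 0 < η) (xs : Euc n) (hstat : EtaStationary f s η xs) :
    ∀ x : Euc n, f xs ≤ f x + nthAbs xs s / η * ∑ i ∈ (supp xs)ᶜ, |x i| := by
  intro x
  have hconvex := hconv.add_inner_gradient_le (Set.mem_univ xs) (Set.mem_univ x)
    (hf.differentiable two_ne_zero xs)
  have hinner := neg_inner_sub_le (x := x)
    (fun i hi => hstat.gradient_eq_zero hη.ne' (Or.inl hi))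
    (fun i hi => hstat.abs_gradient_le_nthAbs hs hη hi)
  linarith
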